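/- Assuming the main theorem (no codewords of C_k(n,q)\C_{n−k}(n,q)^⊥ with weight in ]θ_k, 2q^k[, for p > 5) and the lower bound that the minimum weight of C_{n−k}(n,q)^⊥ is at least (12θ_k + 6)/7 for p > 7, there are no codewords in C_k(n,q) with weight in the open interval ]θ_k, (12θ_k + 6)/7[ when p > 7. -/
import Mathlib


noncomputable section
open Projectivization Classical
open scoped LinearAlgebra.Projectivization

variable {K : Type*} [Field K] {V : Type*} [AddCommGroup V] [Module K V]

/-- The point set of the projective subspace determined by a linear subspace `W`. -/
def projPts (W : Submodule K V) : Set (ℙ K V) := {x | x.submodule ≤ W}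

/-- The incidence (characteristic) vector of a point set, over `ZMod p`. -/
def inc (p : ℕ) (S : Set (ℙ K V)) : ℙ K V → ZMod p := fun x => if x ∈ S then 1 else 0

/-- The standard scalar product of two vectors indexed by the points. -/
def dot (p : ℕ) [Fintype (ℙ K V)] (c d : ℙ K V → ZMod p) : ZMod p := ∑ x, c x * d x

/-- The support of a vector. -/
def supp {p : ℕ} (c : ℙ K V → ZMod p) : Set (ℙ K V) := {x | c x ≠ 0}

/-- The weight of a vector. -/
def wt {p : ℕ} (c : ℙ K V → ZMod p) : ℕ := Nat.card {x : ℙ K V // c x ≠ 0}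

/-- The `p`-ary code spanned by the incidence vectors of the `k`-dimensional
projective subspaces (i.e. `(k+1)`-dimensional linear subspaces). -/
def code (p : ℕ) (k : ℕ) : Submodule (ZMod p) (ℙ K V → ZMod p) :=
  Submodule.span (ZMod p)
    {v | ∃ W : Submodule K V, Module.finrank K W = k + 1 ∧ v = inc p (projPts W)}

/-- The dual code. -/
def dualCode (p : ℕ) [Fintype (ℙ K V)] (C : Submodule (ZMod p) (ℙ K V → ZMod p)) :
    Set (ℙ K V → ZMod p) := {v | ∀ c ∈ C, dot p v c = 0}

/-- `B` blocks every projective subspace of projective dimension `m`. -/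
def BlocksDim (m : ℕ) (B : Set (ℙ K V)) : Prop :=
  ∀ W : Submodule K V, Module.finrank K W = m + 1 → (B ∩ projPts W).Nonempty

/-- `B` is a minimal set blocking all projective subspaces of dimension `m`. -/
def MinimalBlocksDim (m : ℕ) (B : Set (ℙ K V)) : Prop :=
  BlocksDim m B ∧ ∀ B' ⊂ B, ¬ BlocksDim m B'

/-- A `j`-blocking set `B` (blocking all `(n-j)`-spaces) is small if `|B| < 3(q^j+1)/2`. -/
def SmallBS (q j : ℕ) (B : Set (ℙ K V)) : Prop := 2 * Nat.card B < 3 * (q ^ j + 1)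

end

noncomputable section
open Projectivization Classical
open scoped LinearAlgebra.Projectivization

/-- The vector space `F_q^{n+1}` with `q = p^h`, underlying `PG(n,q)`. -/
abbrev GFvec (p h n : ℕ) [Fact p.Prime] : Type := Fin (n + 1) → GaloisField p h

/-- The point set of `PG(n,q)`, `q = p^h`. -/
abbrev PGPoint (p h n : ℕ) [Fact p.Prime] : Type := ℙ (GaloisField p h) (GFvec p h n)

/-- The point set of `PG(N,p)`, `p` prime. -/
abbrev PGp (p N : ℕ) [Fact p.Prime] : Type := ℙ (ZMod p) (Fin (N + 1) → ZMod p)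

/-- `θ_k = (q^{k+1}-1)/(q-1)`. -/
def theta (q k : ℕ) : ℕ := (q ^ (k + 1) - 1) / (q - 1)

end

open Projectivization Classical
open scoped LinearAlgebra.Projectivization


lemma theta_bound_aux (q k : ℕ) (hq : 11 ≤ q) (hk : 1 ≤ k) :
    12 * theta q k + 6 ≤ 14 * q ^ k := by
  have hdvd : (q - 1) ∣ q ^ (k + 1) - 1 := by
    simpa using Nat.sub_dvd_pow_sub_pow q 1 (k + 1)
  have ht : theta q k * (q - 1) = q ^ (k + 1) - 1 := Nat.div_mul_cancel hdvd
  have ha : q ≤ q ^ k := Nat.le_self_pow (by omega) q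
  have hb : q ^ (k + 1) = q * q ^ k := by ring
  have hba : 11 * q ^ k ≤ q ^ (k + 1) := by
    rw [hb]; exact Nat.mul_le_mul_right _ hq
  have h1 : 1 ≤ q ^ k := Nat.one_le_pow _ _ (by omega)
  refine Nat.le_of_mul_le_mul_right ?_ (show 0 < q - 1 by omega)
  have hsub : q ^ k * (q - 1) = q ^ (k + 1) - q ^ k := by
    rw [Nat.mul_sub, hb, mul_comm, mul_one]
  have hexp : (12 * theta q k + 6) * (q - 1)
      = 12 * (theta q k * (q - 1)) + 6 * (q - 1) := by ring
  rw [hexp, ht]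
  have : 14 * q ^ k * (q - 1) = 14 * (q ^ (k + 1) - q ^ k) := by
    rw [mul_assoc, hsub]
  rw [this]
  omega

/-- assuming the main theorem and the lower bound `(12θ_k+6)/7` on the minimum
weight of `C_{n-k}(n,q)^⊥` for `p > 7`, there are no codewords of `C_k(n,q)` with weight in
the open interval `]θ_k, (12θ_k+6)/7[`. -/
theorem stmt16 (p h n k : ℕ) [Fact p.Prime] (hp : 7 < p) (hh : 1 ≤ h) (hn : 2 ≤ n)
    (hk1 : 1 ≤ k) (hk2 : k ≤ n - 1)
    [Fintype (PGPoint p h n)]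
    -- the main theorem
    (hmain : ∀ c : PGPoint p h n → ZMod p, c ∈ code p k →
      c ∉ dualCode p (code p (n - k)) →
        ¬ (theta (p ^ h) k < wt c ∧ wt c < 2 * (p ^ h) ^ k))
    -- the dual minimum weight bound: `wt c ≥ (12θ_k+6)/7` for nonzero `c ∈ C_{n-k}(n,q)^⊥`
    (hdual : ∀ c : PGPoint p h n → ZMod p, c ∈ dualCode p (code p (n - k)) → c ≠ 0 →
      12 * theta (p ^ h) k + 6 ≤ 7 * wt c) :
    ∀ c : PGPoint p h n → ZMod p, c ∈ code p k →
      ¬ (theta (p ^ h) k < wt c ∧ 7 * wt c < 12 * theta (p ^ h) k + 6) := by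
  intro c hc ⟨hw1, hw2⟩
  have hp11 : 11 ≤ p := by
    have hpp : p.Prime := Fact.out
    rcases (by omega : p = 8 ∨ p = 9 ∨ p = 10 ∨ 11 ≤ p) with h8 | h9 | h10 | h
    · rw [h8] at hpp; norm_num at hpp
    · rw [h9] at hpp; norm_num at hpp
    · rw [h10] at hpp; norm_num at hpp
    · exact h
  have hq11 : 11 ≤ p ^ h := le_trans hp11 (Nat.le_self_pow (by omega) p)
  have hbound := theta_bound_aux (p ^ h) k hq11 hk1
  by_cases hd : c ∈ dualCode p (code p (n - k))
  · have hne : c ≠ 0 := by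
      intro h0
      rw [h0] at hw1
      have : wt (0 : PGPoint p h n → ZMod p) = 0 := by simp [wt]
      omega
    have := hdual c hd hne
    omega
  · exact hmain c hc hd ⟨hw1, by omega⟩
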